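/- arXiv:math/0405401 — 3 statements merged into one kernel-verified Lean document; each statement's English description precedes it below -/
import Mathlib

section
/- Equip ℕ with the topology in which a set is open if and only if it is downward closed. Let E = {n ∈ ℕ : n is even} and define φ : 𝒫(ℕ) → 𝒫(ℕ) by φ(A) = A ∩ closure(closure(A) ∩ Aᶜ). Then for every j ∈ ℕ, the j-th iterate satisfies φ^[j](E) = {n ∈ ℕ : n is even and 2j ≤ n} = E ∩ [2j, ∞). -/
/-- The topology on `ℕ` in which a set is open if and only if it is downward closed
(the lower Alexandrov topology of the usual order). -/
def lowerTopology : TopologicalSpace ℕ where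
  IsOpen U := ∀ ⦃m n : ℕ⦄, n ∈ U → m ≤ n → m ∈ U
  isOpen_univ := fun _ _ _ _ => trivial
  isOpen_inter := fun _ _ hs ht _ _ hn hmn => ⟨hs hn.1 hmn, ht hn.2 hmn⟩
  isOpen_sUnion := fun _ hS _ _ hn hmn => by
    obtain ⟨s, hsS, hns⟩ := hn
    exact ⟨s, hsS, hS s hsS hns hmn⟩

/-- The operation `φ(A) = A ∩ k(kA ∩ Aᶜ)` on subsets of `ℕ`, where `k` is the closure in the
lower topology. -/
def kuratowskiPhi (A : Set ℕ) : Set ℕ :=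
  A ∩ @closure ℕ lowerTopology (@closure ℕ lowerTopology A ∩ Aᶜ)

/-! In the lower set topology closure is upper closure, so `φ(A)` consists of the points of `A`
lying above some point outside `A` which itself lies above a point of `A`. For `E ∩ [2j, ∞)` the
least such outside point is `2j + 1`, so `φ` removes exactly `2j`. -/

open Set

lemma IsLeast.coe_upperClosure {α : Type*} [Preorder α] {s : Set α} {a : α} (h : IsLeast s a) :
    (upperClosure s : Set α) = Ici a := by
  ext x
  simp only [SetLike.mem_coe, mem_upperClosure, mem_Ici]
  exact ⟨fun ⟨_, hb, hbx⟩ => (h.2 hb).trans hbx, fun hx => ⟨a, h.1, hx⟩⟩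

lemma lowerTopology_eq_lowerSet : lowerTopology = Topology.lowerSet ℕ := by
  ext U
  exact ⟨fun h _ _ hba ha => h ha hba, fun h _ _ hn hmn => h hmn hn⟩

lemma closure_lowerTopology (A : Set ℕ) : @closure ℕ lowerTopology A = upperClosure A := by
  rw [lowerTopology_eq_lowerSet]
  exact @Topology.IsLowerSet.closure_eq_upperClosure ℕ _ (Topology.lowerSet ℕ) _ A

lemma kuratowskiPhi_eq (A : Set ℕ) :
    kuratowskiPhi A = A ∩ upperClosure ((upperClosure A : Set ℕ) ∩ Aᶜ) := by
  simp only [kuratowskiPhi, closure_lowerTopology]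

lemma isLeast_even_ge (j : ℕ) : IsLeast {n : ℕ | Even n ∧ 2 * j ≤ n} (2 * j) :=
  ⟨⟨even_two_mul j, le_rfl⟩, fun _ hn => hn.2⟩

lemma isLeast_Ici_inter_compl_even_ge (j : ℕ) :
    IsLeast (Ici (2 * j) ∩ {n : ℕ | Even n ∧ 2 * j ≤ n}ᶜ) (2 * j + 1) := by
  refine ⟨⟨Nat.le_succ _, fun h => Nat.not_even_two_mul_add_one j h.1⟩, ?_⟩
  rintro n ⟨hjn, hn⟩
  have hne : n ≠ 2 * j := fun h => hn ⟨h ▸ even_two_mul j, hjn⟩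
  exact Nat.lt_of_le_of_ne hjn hne.symm

lemma kuratowskiPhi_even_ge (j : ℕ) :
    kuratowskiPhi {n : ℕ | Even n ∧ 2 * j ≤ n} = {n : ℕ | Even n ∧ 2 * (j + 1) ≤ n} := by
  rw [kuratowskiPhi_eq, (isLeast_even_ge j).coe_upperClosure,
    (isLeast_Ici_inter_compl_even_ge j).coe_upperClosure]
  ext n
  simp only [mem_inter_iff, mem_ofPred_eq, mem_Ici, Nat.even_iff]
  omega

/-- For `E` the even numbers and `φ(A) = A ∩ k(kA ∩ Aᶜ)` in the lower topology on `ℕ`,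
the `j`-th iterate satisfies `φ^[j](E) = {n : Even n ∧ 2j ≤ n} = E ∩ [2j, ∞)`. -/
theorem kuratowskiPhi_iterate (j : ℕ) :
    kuratowskiPhi^[j] {n : ℕ | Even n} = {n : ℕ | Even n ∧ 2 * j ≤ n} := by
  induction j with
  | zero => simp
  | succ j ih => rw [Function.iterate_succ_apply', ih, kuratowskiPhi_even_ge]
end

section
/- Equip ℕ with the topology in which a set is open if and only if it is downward closed, and let E = {n ∈ ℕ : n is even}. Then the smallest family of subsets of ℕ containing E and closed under topological closure, complement, and binary intersection is infinite. Consequently, there is a topological space and a single subset from which the operations closure, complement, and intersection generate infinitely many distinct sets. -/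
/-- The family of subsets of `ℕ` generated from the set `E` of even numbers by successive
applications of closure (in the lower topology), complement, and binary intersection:
the smallest collection of subsets of `ℕ` containing `E` and closed under these operations. -/
inductive kcwGenEven : Set ℕ → Prop
  | base : kcwGenEven {n : ℕ | Even n}
  | closure {A : Set ℕ} : kcwGenEven A → kcwGenEven (@closure ℕ lowerTopology A)
  | compl {A : Set ℕ} : kcwGenEven A → kcwGenEven Aᶜ
  | inter {A B : Set ℕ} : kcwGenEven A → kcwGenEven B → kcwGenEven (A ∩ B)

/-!
In an Alexandrov topology whose open sets are the lower sets, the closure of a set is its upper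
closure, so the closure of a set with least element `a` is the ray `[a, ∞)`. Starting from
`closure E = [0, ∞)`, intersecting `[k, ∞)` with whichever of `E`, `Eᶜ` omits `k` and taking the
closure yields `[k + 1, ∞)`. Hence every ray `[k, ∞)` is generated, and these are pairwise distinct.
-/

open Set

lemma Topology.IsLowerSet.closure_eq_Ici {α : Type*} [Preorder α] [TopologicalSpace α]
    [Topology.IsLowerSet α] {s : Set α} {a : α} (h : IsLeast s a) : closure s = Ici a := by
  rw [Topology.IsLowerSet.closure_eq_upperClosure]
  ext x
  simp only [SetLike.mem_coe, mem_upperClosure, mem_Ici]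
  exact ⟨fun ⟨b, hb, hbx⟩ => (h.2 hb).trans hbx, fun hx => ⟨a, h.1, hx⟩⟩

lemma isLowerSet_lowerTopology : @Topology.IsLowerSet ℕ lowerTopology _ :=
  @Topology.IsLowerSet.mk ℕ lowerTopology _ <| TopologicalSpace.ext_iff.2 fun _ =>
    ⟨fun h _ _ hba ha => h ha hba, fun h _ _ hn hmn => h hmn hn⟩

lemma lowerTopology_closure_eq_Ici {s : Set ℕ} {a : ℕ} (h : IsLeast s a) :
    @closure ℕ lowerTopology s = Ici a := by
  let := lowerTopology
  have := isLowerSet_lowerTopology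
  exact Topology.IsLowerSet.closure_eq_Ici h

lemma kcwGenEven_even_iff (p : Prop) : kcwGenEven {n | Even n ↔ p} := by
  by_cases hp : p
  · simpa only [hp, iff_true] using kcwGenEven.base
  · simpa only [hp, iff_false, compl_ofPred] using kcwGenEven.base.compl

lemma kcwGenEven_Ici (k : ℕ) : kcwGenEven (Ici k) := by
  induction k with
  | zero =>
    have hleast : IsLeast {n : ℕ | Even n} 0 := ⟨Even.zero, fun n _ => n.zero_le⟩
    exact lowerTopology_closure_eq_Ici hleast ▸ kcwGenEven.base.closure
  | succ k ih =>
    have hleast : IsLeast ({n | Even n ↔ ¬Even k} ∩ Ici k) (k + 1) := by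
      refine ⟨⟨Nat.even_add_one, k.le_succ⟩, ?_⟩
      rintro n ⟨hpar, hkn : k ≤ n⟩
      have hnk : n ≠ k := by rintro rfl; exact iff_not_self hpar
      exact Nat.succ_le_of_lt (lt_of_le_of_ne hkn hnk.symm)
    exact lowerTopology_closure_eq_Ici hleast ▸ ((kcwGenEven_even_iff _).inter ih).closure

/-- The smallest family of subsets of `ℕ` (with the lower topology) containing the even
numbers and closed under closure, complement, and binary intersection is infinite: closure,
complement, and intersection can generate infinitely many distinct sets from a single set. -/
theorem kcwGenEven_infinite : {A : Set ℕ | kcwGenEven A}.Infinite :=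
  infinite_of_injective_forall_mem Ici_injective kcwGenEven_Ici
end

section
/- Let X be a topological space, n ≥ 1, and let E₁, …, E_n ⊆ X. The smallest family of subsets of X containing E₁, …, E_n and closed under topological interior and binary intersection has at most 3^n − 1 elements: every member of this family is an intersection over a nonempty subcollection of the generators in which each E_j contributes either E_j, or interior(E_j), or nothing. -/
/-- The family of subsets of a topological space `X` generated from the sets `E 0, …, E (n-1)`
by successive applications of topological interior and binary intersection: the smallest
collection of subsets of `X` containing all the `E j` and closed under these operations. -/
inductive iwGen {X : Type*} [TopologicalSpace X] {n : ℕ} (E : Fin n → Set X) : Set X → Prop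
  | base (j : Fin n) : iwGen E (E j)
  | interior {A : Set X} : iwGen E A → iwGen E (interior A)
  | inter {A B : Set X} : iwGen E A → iwGen E B → iwGen E (A ∩ B)

/-!
Each `E j` contributes to a member of the family one set of the chain
`interior (E j) ⊆ E j ⊆ univ`. Indexing this chain monotonically by `Fin 3`, a member is coded by
some `g : Fin n → Fin 3` other than `⊤`: intersection becomes the pointwise minimum of codes and,
since interior commutes with finite intersections, interior sends every code below `⊤` to `0`.
Hence there are at most `3 ^ n - 1` members.
-/

open Set

section
variable {X : Type*} [TopologicalSpace X]

def interiorChain (A : Set X) : Fin 3 → Set X := ![interior A, A, univ]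

theorem interiorChain_monotone (A : Set X) : Monotone (interiorChain A) := by
  intro a b hab
  fin_cases a <;> fin_cases b <;> simp_all [interiorChain, interior_subset]

theorem interiorChain_inf (A : Set X) (a b : Fin 3) :
    interiorChain A (a ⊓ b) = interiorChain A a ∩ interiorChain A b := by
  rcases le_total a b with h | h
  · rw [inf_eq_left.2 h, inter_eq_left.2 (interiorChain_monotone A h)]
  · rw [inf_eq_right.2 h, inter_eq_right.2 (interiorChain_monotone A h)]

def interiorCode (a : Fin 3) : Fin 3 := if a = ⊤ then ⊤ else 0

theorem interiorCode_ne_top {a : Fin 3} (ha : a ≠ ⊤) : interiorCode a ≠ ⊤ := by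
  simp [interiorCode, ha]

theorem interior_interiorChain (A : Set X) (a : Fin 3) :
    interior (interiorChain A a) = interiorChain A (interiorCode a) := by
  fin_cases a <;> simp [interiorChain, interiorCode, Fin.top_eq_last]

variable {ι : Type*}

def chainInter (E : ι → Set X) (g : ι → Fin 3) : Set X := ⋂ j, interiorChain (E j) (g j)

theorem chainInter_inf (E : ι → Set X) (g h : ι → Fin 3) :
    chainInter E (g ⊓ h) = chainInter E g ∩ chainInter E h := by
  simp only [chainInter, Pi.inf_apply, interiorChain_inf, iInter_inter_distrib]

theorem interior_chainInter [Finite ι] (E : ι → Set X) (g : ι → Fin 3) :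
    interior (chainInter E g) = chainInter E (interiorCode ∘ g) := by
  simp only [chainInter, interior_iInter_of_finite, interior_interiorChain, Function.comp_apply]

theorem chainInter_update_top [DecidableEq ι] (E : ι → Set X) (j : ι) :
    chainInter E (Function.update ⊤ j 1) = E j := by
  ext x
  simp only [chainInter, mem_iInter]
  refine ⟨fun hx => by simpa [interiorChain] using hx j, fun hx i => ?_⟩
  rcases eq_or_ne i j with rfl | hij
  · simpa [interiorChain] using hx
  · simp [Function.update_of_ne hij, interiorChain, Fin.top_eq_last]

end

theorem iwGen.exists_chainInter {X : Type*} [TopologicalSpace X] {n : ℕ} {E : Fin n → Set X}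
    {A : Set X} (hA : iwGen E A) : ∃ g ≠ ⊤, chainInter E g = A := by
  induction hA with
  | base j =>
    refine ⟨Function.update ⊤ j 1, fun h => ?_, chainInter_update_top E j⟩
    simpa [Fin.top_eq_last] using congrFun h j
  | interior _ ih =>
    obtain ⟨g, hg, rfl⟩ := ih
    obtain ⟨j, hj⟩ := Function.ne_iff.1 hg
    exact ⟨interiorCode ∘ g, Function.ne_iff.2 ⟨j, interiorCode_ne_top hj⟩,
      (interior_chainInter E g).symm⟩
  | inter _ _ ihA ihB =>
    obtain ⟨g, hg, rfl⟩ := ihA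
    obtain ⟨h, -, rfl⟩ := ihB
    exact ⟨g ⊓ h, fun hgh => hg (inf_eq_top_iff.1 hgh).1, chainInter_inf E g h⟩

theorem interior_inter_generated_card_general {X : Type*} [TopologicalSpace X] {n : ℕ}
    (E : Fin n → Set X) :
    {A : Set X | iwGen E A}.encard ≤ 3 ^ n - 1 := by
  calc {A : Set X | iwGen E A}.encard ≤ (chainInter E '' {⊤}ᶜ).encard :=
        encard_le_encard fun _ hA => hA.exists_chainInter
    _ ≤ ({⊤}ᶜ : Set (Fin n → Fin 3)).encard := encard_image_le _ _
    _ = 3 ^ n - 1 := by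
      rw [compl_eq_univ_sdiff, encard_sdiff_singleton_of_mem (mem_univ _), encard_univ]
      simp [ENat.card_eq_coe_fintype_card]

/-- For `n ≥ 1` subsets `E₁, …, E_n` of a topological space `X`, the smallest family of
subsets of `X` containing the `E j` and closed under interior and binary intersection has
at most `3 ^ n - 1` elements. -/
theorem interior_inter_generated_card {X : Type*} [TopologicalSpace X] {n : ℕ} (hn : 1 ≤ n)
    (E : Fin n → Set X) :
    {A : Set X | iwGen E A}.encard ≤ 3 ^ n - 1 :=
  interior_inter_generated_card_general E
end
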